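/- arXiv:2603.24110 — 2 statements merged into one kernel-verified Lean document; each statement's English description precedes it below -/
import Mathlib

section
/- Let f:[0,∞)→[0,∞) be locally Lipschitz, convex, with f(0)=0 and f(u)>0 for u>0, satisfying ∫₁^∞ du/f(u) < ∞ and lim_{u→∞} f(u)/u = +∞. Fix λ>0 and set s₀(λ) := inf{u>0 : f(u)/u > λ}. If y:[0,T*)→ℝ is C¹, satisfies y'(t)+λ y(t) ≥ f(y(t)) with y(0)=y₀ > s₀(λ), and [0,T*) is its maximal interval of existence, then T* < ∞ and y(t) → +∞ as t → T*. Moreover, with c := 1 - λy₀/f(y₀) ∈ (0,1), one has T* ≤ (1/c)∫_{y₀}^∞ du/f(u). -/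
open Filter Set Topology MeasureTheory
open scoped ENNReal

/-!
Pick `u < y₀` with `f u / u > λ`. Convexity and `f 0 = 0` make `f v / v` nondecreasing, so
`f v - λ v ≥ c f v` for `v ≥ y₀`, and `f y₀ > λ y₀` keeps `y` above `y₀`. Hence
`y' ≥ c f(y)`, i.e. `(∫_{y₀}^{y(t)} du / f(u)) - c t` is nondecreasing, and so
`c t ≤ ∫_{y₀}^∞ du / f(u)` for every `t < T*`. This bounds `T*`, and maximality forces blow-up.
-/

section ConvexOn

variable {f : ℝ → ℝ}

lemma ConvexOn.div_le_div_of_map_zero (hf : ConvexOn ℝ (Ici 0) f) (h0 : f 0 = 0)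
    {a b : ℝ} (ha : 0 < a) (hab : a ≤ b) : f a / a ≤ f b / b := by
  simpa [h0] using hf.secant_mono self_mem_Ici (mem_Ici.2 ha.le)
    (mem_Ici.2 (ha.le.trans hab)) ha.ne' (ha.trans_le hab).ne' hab

lemma ConvexOn.pos_and_mul_lt_of_sInf_lt (hf : ConvexOn ℝ (Ici 0) f) (h0 : f 0 = 0) {lam y₀ : ℝ}
    (hsuper : Tendsto (fun u ↦ f u / u) atTop atTop)
    (hy₀ : sInf {u : ℝ | 0 < u ∧ lam < f u / u} < y₀) : 0 < y₀ ∧ lam * y₀ < f y₀ := by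
  have hS : {u : ℝ | 0 < u ∧ lam < f u / u}.Nonempty :=
    ((hsuper.eventually_gt_atTop lam).and (eventually_gt_atTop 0)).exists.imp fun _ h ↦ h.symm
  obtain ⟨u, ⟨hu, hlam_u⟩, hu_y₀⟩ := exists_lt_of_csInf_lt hS hy₀
  have hy₀_pos : 0 < y₀ := hu.trans hu_y₀
  exact ⟨hy₀_pos, (lt_div_iff₀ hy₀_pos).1
    (hlam_u.trans_le (hf.div_le_div_of_map_zero h0 hu hu_y₀.le))⟩

lemma ConvexOn.one_sub_mul_le_sub_of_map_zero (hf : ConvexOn ℝ (Ici 0) f)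
    (h0 : f 0 = 0) {lam y₀ v : ℝ} (hlam : 0 ≤ lam) (hy₀ : 0 < y₀) (hfy₀ : 0 < f y₀)
    (hv : y₀ ≤ v) : (1 - lam * y₀ / f y₀) * f v ≤ f v - lam * v := by
  have hslope := hf.div_le_div_of_map_zero h0 hy₀ hv
  rw [div_le_div_iff₀ hy₀ (hy₀.trans_le hv)] at hslope
  have : lam * v ≤ lam * y₀ / f y₀ * f v := by
    rw [div_mul_eq_mul_div, le_div_iff₀ hfy₀]
    nlinarith
  linarith [show (1 - lam * y₀ / f y₀) * f v = f v - lam * y₀ / f y₀ * f v by ring]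

lemma ConvexOn.continuousOn_one_div (hf : ConvexOn ℝ (Ici 0) f)
    (hfpos : ∀ v, 0 < v → 0 < f v) : ContinuousOn (fun v ↦ 1 / f v) (Ioi 0) :=
  continuousOn_const.div (by simpa using hf.continuousOn_interior) fun v hv ↦ (hfpos v hv).ne'

end ConvexOn

lemma le_image_of_deriv_pos_of_image_eq {y y' : ℝ → ℝ} {a b v : ℝ}
    (hy : ∀ t ∈ Icc a b, HasDerivAt y (y' t) t) (ha : v ≤ y a)
    (hv : ∀ t ∈ Ico a b, y t = v → 0 < y' t) : ∀ t ∈ Icc a b, v ≤ y t :=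
  image_le_of_deriv_right_lt_deriv_boundary' (f := fun _ ↦ v) (f' := fun _ ↦ 0)
    continuousOn_const (fun _ _ ↦ hasDerivWithinAt_const _ _ _) ha
    (fun t ht ↦ (hy t ht).continuousAt.continuousWithinAt)
    (fun t ht ↦ (hy t (Ico_subset_Icc_self ht)).hasDerivWithinAt)
    (fun t ht h ↦ hv t ht h.symm)

lemma hasDerivAt_intervalIntegral_of_continuousOn_Ioi {g : ℝ → ℝ} (hg : ContinuousOn g (Ioi 0))
    {a b : ℝ} (ha : 0 < a) (hb : 0 < b) : HasDerivAt (fun v ↦ ∫ u in a..v, g u) (g b) b :=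
  intervalIntegral.integral_hasDerivAt_right
    (hg.mono fun _ hu ↦ (lt_min ha hb).trans_le hu.1).intervalIntegrable
    (hg.stronglyMeasurableAtFilter isOpen_Ioi b hb) (hg.continuousAt (Ioi_mem_nhds hb))

lemma mul_sub_le_intervalIntegral_comp {g y y' : ℝ → ℝ} {a b c : ℝ}
    (hg : ContinuousOn g (Ioi 0)) (hab : a ≤ b)
    (hy : ∀ t ∈ Icc a b, HasDerivAt y (y' t) t) (hypos : ∀ t ∈ Icc a b, 0 < y t)
    (hderiv : ∀ t ∈ Icc a b, c ≤ g (y t) * y' t) :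
    c * (b - a) ≤ ∫ v in y a..y b, g v := by
  set G : ℝ → ℝ := fun t ↦ (∫ v in y a..y t, g v) - c * t
  have hG : ∀ t ∈ Icc a b, HasDerivAt G (g (y t) * y' t - c) t := fun t ht ↦ by
    have := ((hasDerivAt_intervalIntegral_of_continuousOn_Ioi hg
      (hypos a (left_mem_Icc.2 hab)) (hypos t ht)).comp t (hy t ht)).sub
      ((hasDerivAt_id t).const_mul c)
    rwa [mul_one] at this
  have hG_mono : MonotoneOn G (Icc a b) :=
    monotoneOn_of_hasDerivWithinAt_nonneg (convex_Icc a b)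
      (fun t ht ↦ (hG t ht).continuousAt.continuousWithinAt)
      (fun t ht ↦ (hG t (interior_subset ht)).hasDerivWithinAt)
      fun t ht ↦ sub_nonneg.2 (hderiv t (interior_subset ht))
  have := hG_mono (left_mem_Icc.2 hab) (right_mem_Icc.2 hab) hab
  simp only [G, intervalIntegral.integral_same] at this
  linarith

lemma intervalIntegral_le_setIntegral_Ici {g : ℝ → ℝ} {a b : ℝ} (hg : IntegrableOn g (Ici a))
    (hg_nonneg : ∀ x ∈ Ici a, 0 ≤ g x) (hab : a ≤ b) :
    ∫ x in a..b, g x ≤ ∫ x in Ici a, g x := by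
  rw [intervalIntegral.integral_of_le hab]
  exact setIntegral_mono_set hg ((ae_restrict_iff' measurableSet_Ici).2 (ae_of_all _ hg_nonneg))
    (Ioc_subset_Ioi_self.trans Ioi_subset_Ici_self).eventuallyLE

lemma ConvexOn.mul_sub_le_setIntegral_Ici_of_deriv_add_mul_ge {f y y' : ℝ → ℝ} {lam a b : ℝ}
    (hf : ConvexOn ℝ (Ici 0) f) (h0 : f 0 = 0) (hfpos : ∀ v, 0 < v → 0 < f v)
    (hint : IntegrableOn (fun v ↦ 1 / f v) (Ici (y a))) (hlam : 0 ≤ lam) (hya : 0 < y a)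
    (hlam_ya : lam * y a < f (y a)) (hab : a ≤ b)
    (hy : ∀ t ∈ Icc a b, HasDerivAt y (y' t) t ∧ f (y t) ≤ y' t + lam * y t) :
    (1 - lam * y a / f (y a)) * (b - a) ≤ ∫ v in Ici (y a), 1 / f v := by
  have hge : ∀ t ∈ Icc a b, y a ≤ y t :=
    le_image_of_deriv_pos_of_image_eq (fun t ht ↦ (hy t ht).1) le_rfl fun t ht hyt ↦ by
      have := (hy t (Ico_subset_Icc_self ht)).2
      rw [hyt] at this
      linarith
  have hderiv : ∀ t ∈ Icc a b, 1 - lam * y a / f (y a) ≤ 1 / f (y t) * y' t := fun t ht ↦ by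
    have hfyt := hfpos _ (hya.trans_le (hge t ht))
    rw [one_div_mul_eq_div, le_div_iff₀ hfyt]
    linarith [(hy t ht).2,
      hf.one_sub_mul_le_sub_of_map_zero h0 hlam hya (hfpos _ hya) (hge t ht)]
  exact (mul_sub_le_intervalIntegral_comp (hf.continuousOn_one_div hfpos) hab
    (fun t ht ↦ (hy t ht).1) (fun t ht ↦ hya.trans_le (hge t ht)) hderiv).trans
    (intervalIntegral_le_setIntegral_Ici hint
      (fun v hv ↦ (one_div_pos.2 (hfpos v (hya.trans_le hv))).le) (hge b (right_mem_Icc.2 hab)))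

lemma ENNReal.le_ofReal_of_forall_ofReal_lt {T : ℝ≥0∞} {M : ℝ}
    (h : ∀ t, 0 ≤ t → ENNReal.ofReal t < T → t ≤ M) : T ≤ ENNReal.ofReal M := by
  by_contra! hlt
  obtain ⟨t, ht, hMt, htT⟩ := ENNReal.lt_iff_exists_real_btwn.1 hlt
  linarith [h t ht htT, (ENNReal.ofReal_lt_ofReal_iff'.1 hMt).1]

theorem ode_blow_up_general (f : ℝ → ℝ)
    (hconv : ConvexOn ℝ (Ici (0 : ℝ)) f)
    (hf0 : f 0 = 0) (hfpos : ∀ u : ℝ, 0 < u → 0 < f u)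
    (hosgood : MeasureTheory.IntegrableOn (fun u => 1 / f u) (Ici (1 : ℝ)))
    (hsuper : Tendsto (fun u => f u / u) atTop atTop)
    (lam : ℝ) (hlam : 0 < lam)
    (s₀ : ℝ) (hs₀ : s₀ = sInf {u : ℝ | 0 < u ∧ lam < f u / u})
    (Tstar : ℝ≥0∞)
    (y : ℝ → ℝ) (y₀ : ℝ) (hy0 : y 0 = y₀)
    (hy0big : s₀ < y₀)
    (hy : ∀ t : ℝ, 0 ≤ t → (ENNReal.ofReal t) < Tstar →
      HasDerivAt y (deriv y t) t ∧ f (y t) ≤ deriv y t + lam * y t)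
    (hmax : Tstar = ⊤ ∨
      Tendsto y (nhdsWithin Tstar.toReal (Iio Tstar.toReal)) atTop) :
    Tstar < ⊤ ∧
    Tendsto y (nhdsWithin Tstar.toReal (Iio Tstar.toReal)) atTop ∧
    (0 < 1 - lam * y₀ / f y₀ ∧ 1 - lam * y₀ / f y₀ < 1) ∧
    Tstar.toReal ≤ (1 / (1 - lam * y₀ / f y₀)) * ∫ u in Ici y₀, 1 / f u := by
  obtain ⟨hy₀, hlam_y₀⟩ := hconv.pos_and_mul_lt_of_sInf_lt hf0 hsuper (hs₀ ▸ hy0big)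
  have hfy₀ : 0 < f y₀ := hfpos y₀ hy₀
  set c := 1 - lam * y₀ / f y₀
  have hc : 0 < c ∧ c < 1 := ⟨by linarith [(div_lt_one hfy₀).2 hlam_y₀],
    by linarith [div_pos (mul_pos hlam hy₀) hfy₀]⟩
  have hint : IntegrableOn (fun u ↦ 1 / f u) (Ici y₀) :=
    ((((hconv.continuousOn_one_div hfpos).mono fun _ hv ↦ hy₀.trans_le hv.1).integrableOn_Icc
      (b := 1)).union hosgood).mono_set Ici_subset_Icc_union_Ici
  set I := ∫ u in Ici y₀, 1 / f u
  have hbound : ∀ t, 0 ≤ t → ENNReal.ofReal t < Tstar → t ≤ 1 / c * I := fun t ht htT ↦ by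
    have := hconv.mul_sub_le_setIntegral_Ici_of_deriv_add_mul_ge hf0 hfpos (hy0 ▸ hint) hlam.le
      (hy0 ▸ hy₀) (hy0 ▸ hlam_y₀) ht
      fun s hs ↦ hy s hs.1 ((ENNReal.ofReal_le_ofReal hs.2).trans_lt htT)
    rw [hy0, sub_zero] at this
    rw [one_div_mul_eq_div, le_div_iff₀ hc.1]
    linarith
  have hTle := ENNReal.le_ofReal_of_forall_ofReal_lt hbound
  have hfin : Tstar < ⊤ := hTle.trans_lt ENNReal.ofReal_lt_top
  refine ⟨hfin, hmax.resolve_left hfin.ne, hc, ENNReal.toReal_le_of_le_ofReal ?_ hTle⟩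
  exact mul_nonneg (one_div_pos.2 hc.1).le
    (setIntegral_nonneg measurableSet_Ici fun v hv ↦ (one_div_pos.2 (hfpos v (hy₀.trans_le hv))).le)

/-- Blow-up for the ODE inequality `y' + λ y ≥ f(y)`, `y(0) = y₀ > s₀(λ)`,
where `f` is locally Lipschitz, convex, vanishes at `0`, is positive on
`(0,∞)`, superlinear, and satisfies the Osgood condition.  Maximality of the
interval of existence `[0,T*)` is expressed by the standard dichotomy: either
`T* = ∞` or `y` tends to `+∞` at `T*`.  The conclusion: `T* < ∞`, `y` blows up
at `T*`, `c := 1 - λ y₀ / f(y₀) ∈ (0,1)`, and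
`T* ≤ (1/c) ∫_{y₀}^∞ du / f(u)`. -/
theorem ode_blow_up (f : ℝ → ℝ)
    (hlip : ∀ x ∈ Ici (0 : ℝ), ∃ K : NNReal, ∃ t ∈ nhdsWithin x (Ici (0 : ℝ)),
      LipschitzOnWith K f t)
    (hconv : ConvexOn ℝ (Ici (0 : ℝ)) f)
    (hf0 : f 0 = 0) (hfpos : ∀ u : ℝ, 0 < u → 0 < f u)
    (hosgood : MeasureTheory.IntegrableOn (fun u => 1 / f u) (Ici (1 : ℝ)))
    (hsuper : Tendsto (fun u => f u / u) atTop atTop)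
    (lam : ℝ) (hlam : 0 < lam)
    (s₀ : ℝ) (hs₀ : s₀ = sInf {u : ℝ | 0 < u ∧ lam < f u / u})
    (Tstar : ℝ≥0∞) (hT : 0 < Tstar)
    (y : ℝ → ℝ) (y₀ : ℝ) (hy0 : y 0 = y₀)
    (hy0pos : 0 < y₀) (hy0big : s₀ < y₀)
    (hy : ∀ t : ℝ, 0 ≤ t → (ENNReal.ofReal t) < Tstar →
      HasDerivAt y (deriv y t) t ∧ f (y t) ≤ deriv y t + lam * y t)
    (hmax : Tstar = ⊤ ∨
      Tendsto y (nhdsWithin Tstar.toReal (Iio Tstar.toReal)) atTop) :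
    Tstar < ⊤ ∧
    Tendsto y (nhdsWithin Tstar.toReal (Iio Tstar.toReal)) atTop ∧
    (0 < 1 - lam * y₀ / f y₀ ∧ 1 - lam * y₀ / f y₀ < 1) ∧
    Tstar.toReal ≤ (1 / (1 - lam * y₀ / f y₀)) * ∫ u in Ici y₀, 1 / f u :=
  ode_blow_up_general f hconv hf0 hfpos hosgood hsuper lam hlam s₀ hs₀ Tstar y y₀ hy0 hy0big hy hmax
end

section
/- Let (X,ω,μ) be a connected locally finite weighted graph, Ω ⊂ X a nonempty finite set, and for a > 0 define ψ(x) := e^{-a·ρ(x,Ω)}. If λ ≥ sup_{x∈X} 𝔇₊(x) (assumed finite), then Δψ(x) + λψ(x) ≥ 0 for all x ∈ X. -/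
open scoped BigOperators

/-- For `ψ(x) = e^{-a ρ(x,Ω)}` on a connected locally finite weighted graph,
if `λ ≥ sup_x 𝔇₊(x)` (assumed finite), then `Δψ + λψ ≥ 0` on `X`. -/
theorem barrier_laplacian_inequality {X : Type*} (G : SimpleGraph X)
    (hconn : G.Connected) (hlf : ∀ x : X, (G.neighborSet x).Finite)
    (μ : X → ℝ) (hμ : ∀ x, 0 < μ x)
    (ω : X → X → ℝ) (hωnn : ∀ x y, 0 ≤ ω x y) (hωsymm : ∀ x y, ω x y = ω y x)
    (hadj : ∀ x y : X, G.Adj x y ↔ 0 < ω x y)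
    (Ω : Set X) (hΩne : Ω.Nonempty) (hΩfin : Ω.Finite)
    (ρ : X → ℕ) (hρ : ∀ x : X, ρ x = sInf {n : ℕ | ∃ y ∈ Ω, G.dist x y = n})
    (a : ℝ) (ha : 0 < a)
    (ψ : X → ℝ) (hψ : ∀ x : X, ψ x = Real.exp (-a * (ρ x : ℝ)))
    (Dp : X → ℝ)
    (hDp : ∀ x : X, Dp x = (1 / μ x) * ∑ᶠ y ∈ {y : X | ρ y = ρ x + 1}, ω x y)
    (hbdd : BddAbove (Set.range Dp))
    (lam : ℝ) (hlam : sSup (Set.range Dp) ≤ lam) :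
    ∀ x : X, 0 ≤ (1 / μ x) * ∑ᶠ y, ω x y * (ψ y - ψ x) + lam * ψ x := by
  intro x
  -- ω x y = 0 when not adjacent
  have hω0 : ∀ y, ¬ G.Adj x y → ω x y = 0 := fun y h => by
    have := hωnn x y
    rcases lt_or_eq_of_le this with h' | h'
    · exact absurd ((hadj x y).mpr h') h
    · exact h'.symm
  -- key: neighbors satisfy ρ y ≤ ρ x + 1
  have hset : ∀ z : X, {n : ℕ | ∃ y ∈ Ω, G.dist z y = n}.Nonempty := by
    intro z
    obtain ⟨w, hw⟩ := hΩne
    exact ⟨G.dist z w, w, hw, rfl⟩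
  have hρle : ∀ y, G.Adj x y → ρ y ≤ ρ x + 1 := by
    intro y hxy
    obtain ⟨z, hzΩ, hz⟩ := Nat.sInf_mem (hset x)
    rw [← hρ x] at hz
    have h1 : ρ y ≤ G.dist y z := by
      rw [hρ y]; exact Nat.sInf_le ⟨z, hzΩ, rfl⟩
    have h2 : G.dist y z ≤ G.dist y x + G.dist x z := hconn.dist_triangle
    have h3 : G.dist y x = 1 := (SimpleGraph.dist_eq_one_iff_adj).mpr hxy.symm
    omega
  have hψpos : ∀ y, 0 < ψ y := fun y => by rw [hψ]; exact Real.exp_pos _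
  -- finite neighbor finset
  set T : Finset X := (hlf x).toFinset with hT
  have hmemT : ∀ y, y ∈ T ↔ G.Adj x y := by
    intro y; simp [hT, Set.Finite.mem_toFinset, SimpleGraph.mem_neighborSet]
  have hsupp : ∀ (g : X → ℝ), (∀ y, g y = 0 → True) → True := fun _ _ => trivial
  -- rewrite the two finsums as Finset sums over T
  have hsum1 : ∑ᶠ y, ω x y * (ψ y - ψ x) = ∑ y ∈ T, ω x y * (ψ y - ψ x) := by
    apply finsum_eq_sum_of_support_subset
    intro y hy
    simp only [Function.mem_support] at hy
    by_contra hyT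
    rw [hω0 y (fun h => hyT ((hmemT y).mpr h))] at hy
    simp at hy
  have hsum2 : ∑ᶠ y ∈ {y : X | ρ y = ρ x + 1}, ω x y
      = ∑ y ∈ T.filter (fun y => ρ y = ρ x + 1), ω x y := by
    apply finsum_mem_eq_sum_of_inter_support_eq
    ext y
    simp only [Set.mem_inter_iff, Set.mem_setOf_eq, Function.mem_support, Finset.coe_filter,
      Finset.mem_coe, Finset.mem_filter]
    constructor
    · rintro ⟨h1, h2⟩
      refine ⟨⟨?_, h1⟩, h2⟩
      rw [hmemT]
      by_contra h
      exact h2 (hω0 y h)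
    · rintro ⟨⟨_, h1⟩, h2⟩
      exact ⟨h1, h2⟩
  -- Dp x ≤ lam
  have hDple : Dp x ≤ lam := le_trans (le_csSup hbdd ⟨x, rfl⟩) hlam
  -- pointwise lower bound for the sum
  have hlb : ∑ y ∈ T, (if ρ y = ρ x + 1 then -ψ x * ω x y else 0)
      ≤ ∑ y ∈ T, ω x y * (ψ y - ψ x) := by
    apply Finset.sum_le_sum
    intro y hyT
    have hadj' : G.Adj x y := (hmemT y).mp hyT
    by_cases hcase : ρ y = ρ x + 1
    · simp only [hcase, if_true]
      have : -ψ x ≤ ψ y - ψ x := by linarith [hψpos y]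
      calc -ψ x * ω x y = ω x y * (-ψ x) := by ring
        _ ≤ ω x y * (ψ y - ψ x) := mul_le_mul_of_nonneg_left this (hωnn x y)
    · simp only [hcase, if_false]
      have hle : ρ y ≤ ρ x := by have := hρle y hadj'; omega
      have : ψ x ≤ ψ y := by
        rw [hψ, hψ]
        apply Real.exp_le_exp.mpr
        have : (ρ y : ℝ) ≤ (ρ x : ℝ) := Nat.cast_le.mpr hle
        nlinarith
      exact mul_nonneg (hωnn x y) (by linarith)
  -- compute the LHS of hlb
  have hcomp : ∑ y ∈ T, (if ρ y = ρ x + 1 then -ψ x * ω x y else 0)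
      = -ψ x * ∑ y ∈ T.filter (fun y => ρ y = ρ x + 1), ω x y := by
    rw [Finset.mul_sum, Finset.sum_filter]
  have hμx := hμ x
  have hS : -ψ x * (μ x * Dp x) ≤ ∑ᶠ y, ω x y * (ψ y - ψ x) := by
    rw [hsum1]
    calc -ψ x * (μ x * Dp x)
        = -ψ x * ∑ y ∈ T.filter (fun y => ρ y = ρ x + 1), ω x y := by
          rw [hDp, ← hsum2]; field_simp
      _ = ∑ y ∈ T, (if ρ y = ρ x + 1 then -ψ x * ω x y else 0) := hcomp.symm
      _ ≤ _ := hlb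
  have h1μ : 0 < 1 / μ x := by positivity
  have : (1 / μ x) * (-ψ x * (μ x * Dp x)) ≤ (1 / μ x) * ∑ᶠ y, ω x y * (ψ y - ψ x) :=
    mul_le_mul_of_nonneg_left hS (le_of_lt h1μ)
  have heq : (1 / μ x) * (-ψ x * (μ x * Dp x)) = -ψ x * Dp x := by
    field_simp
  rw [heq] at this
  have hfinal : 0 ≤ -ψ x * Dp x + lam * ψ x := by
    have := hψpos x
    nlinarith
  linarith
end
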